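/- If all edge weights of a planar acyclic directed network (with compatibly ordered sources and sinks) are non-negative, then its weight matrix is totally non-negative. -/

import Mathlib

/-- `IsDirPath adj l u v`: the nonempty list of vertices `l` is a directed path
from `u` to `v` in the digraph with adjacency relation `adj`. -/
def IsDirPath {V : Type*} (adj : V → V → Prop) (l : List V) (u v : V) : Prop :=
  l ≠ [] ∧ l.head? = some u ∧ l.getLast? = some v ∧ l.Chain' adj

/-- The weight of a path: the product of the weights of its edges. -/
def pathWeight {V : Type*} (w : V → V → ℝ) (l : List V) : ℝ :=
  ((l.zip l.tail).map fun e => w e.1 e.2).prod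

namespace LGV

open Finset Function

set_option linter.unusedSectionVars false

variable {V : Type*} [DecidableEq V]

/-- split a list at the first element satisfying `pred` -/
def splitF (pred : V → Prop) [DecidablePred pred] : List V → List V × List V
  | [] => ([], [])
  | a :: l => if pred a then ([], a :: l)
      else ((a :: (splitF pred l).1), (splitF pred l).2)

theorem splitF_eq (pred : V → Prop) [DecidablePred pred] :
    ∀ (s : List V) (x : V) (t : List V), (∀ y ∈ s, ¬ pred y) → pred x →
      splitF pred (s ++ x :: t) = (s, x :: t)
  | [], x, t, _, hx => by simp [splitF, hx]
  | a :: s, x, t, hs, hx => by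
      have ha : ¬ pred a := hs a (by simp)
      simp [splitF, ha, splitF_eq pred s x t (fun y hy => hs y (by simp [hy])) hx]

theorem splitF_append (pred : V → Prop) [DecidablePred pred] :
    ∀ l : List V, (splitF pred l).1 ++ (splitF pred l).2 = l
  | [] => rfl
  | a :: l => by
      by_cases h : pred a <;> simp [splitF, h, splitF_append pred l]

theorem splitF_fst (pred : V → Prop) [DecidablePred pred] :
    ∀ l : List V, ∀ y ∈ (splitF pred l).1, ¬ pred y
  | [] => by simp [splitF]
  | a :: l => by
      by_cases h : pred a
      · simp [splitF, h]
      · simp only [splitF, if_neg h]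
        intro y hy
        rcases List.mem_cons.mp hy with rfl | hy
        · exact h
        · exact splitF_fst pred l y hy

theorem splitF_snd_ne_nil (pred : V → Prop) [DecidablePred pred] :
    ∀ (l : List V) (x : V), x ∈ l → pred x → (splitF pred l).2 ≠ []
  | [], x, hx, _ => absurd hx List.not_mem_nil
  | a :: l, x, hx, hpx => by
      by_cases h : pred a
      · simp [splitF, h]
      · simp only [splitF, if_neg h]
        rcases List.mem_cons.mp hx with rfl | hx
        · exact absurd hpx h
        · exact splitF_snd_ne_nil pred l x hx hpx

theorem splitF_snd_head (pred : V → Prop) [DecidablePred pred] :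
    ∀ (l : List V) (h : (splitF pred l).2 ≠ []), pred ((splitF pred l).2.head h)
  | [], h => absurd rfl h
  | a :: l, h => by
      by_cases hp : pred a
      · simp [splitF, hp]
      · simp only [splitF, if_neg hp] at h ⊢
        exact splitF_snd_head pred l h

theorem pathWeight_singleton (w : V → V → ℝ) (x : V) : pathWeight w [x] = 1 := rfl

theorem pathWeight_cons_cons (w : V → V → ℝ) (a c : V) (l : List V) :
    pathWeight w (a :: c :: l) = w a c * pathWeight w (c :: l) := by
  simp [pathWeight]

theorem pathWeight_split (w : V → V → ℝ) (x : V) (t : List V) :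
    ∀ s : List V, pathWeight w (s ++ x :: t) = pathWeight w (s ++ [x]) * pathWeight w (x :: t)
  | [] => by simp [pathWeight_singleton]
  | [a] => by
      simp only [List.cons_append, List.nil_append, pathWeight_cons_cons,
        pathWeight_singleton]
      ring
  | a :: c :: s => by
      have ih := pathWeight_split w x t (c :: s)
      simp only [List.cons_append] at ih ⊢
      rw [pathWeight_cons_cons, pathWeight_cons_cons, ih]
      ring

theorem pathWeight_nonneg (w : V → V → ℝ) (hw : ∀ u v, 0 ≤ w u v) (l : List V) :
    0 ≤ pathWeight w l := by
  apply List.prod_nonneg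
  intro x hx
  obtain ⟨e, _, rfl⟩ := List.mem_map.mp hx
  exact hw _ _

theorem IsDirPath.glue {adj : V → V → Prop} {s₁ t₁ s₂ t₂ : List V} {x u v u' v' : V}
    (hp : IsDirPath adj (s₁ ++ x :: t₁) u v) (hq : IsDirPath adj (s₂ ++ x :: t₂) u' v') :
    IsDirPath adj (s₁ ++ x :: t₂) u v' := by
  obtain ⟨-, hph, -, hpc⟩ := hp
  obtain ⟨-, -, hql, hqc⟩ := hq
  unfold List.Chain' at hpc hqc
  rw [List.isChain_append] at hpc hqc
  refine ⟨by simp, ?_, ?_, ?_⟩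
  · rw [← hph]; cases s₁ <;> simp
  · rw [← hql, List.getLast?_append_cons, List.getLast?_append_cons]
  · unfold List.Chain'
    rw [List.isChain_append]
    refine ⟨hpc.1, hqc.2.1, ?_⟩
    intro y hy z hz
    simp only [List.head?_cons, Option.mem_def, Option.some.injEq] at hz
    subst hz
    exact hpc.2.2 y hy x (by simp)

theorem chain'_nodup {adj : V → V → Prop}
    (hacyc : ∀ l : List V, 2 ≤ l.length → l.Chain' adj → l.head? ≠ l.getLast?) :
    ∀ l : List V, l.Chain' adj → l.Nodup
  | [], _ => List.nodup_nil
  | a :: l, hc => by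
      refine List.nodup_cons.mpr ⟨?_, chain'_nodup hacyc l hc.tail⟩
      intro ha
      obtain ⟨l₁, l₂, rfl⟩ := List.append_of_mem ha
      have hpre : (a :: (l₁ ++ [a])) <+: (a :: (l₁ ++ a :: l₂)) :=
        ⟨l₂, by simp⟩
      have hch : (a :: (l₁ ++ [a])).Chain' adj := hc.prefix hpre
      have := hacyc (a :: (l₁ ++ [a])) (by simp) hch
      have hg : (a :: (l₁ ++ [a])).getLast? = some a := by
        rw [show a :: (l₁ ++ [a]) = (a :: l₁) ++ [a] from by simp]
        exact List.getLast?_concat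
      exact this (by rw [hg]; rfl)

theorem nodup_mid {s t : List V} {x : V} (h : (s ++ x :: t).Nodup) :
    x ∉ s ∧ x ∉ t ∧ ∀ y ∈ s, y ∉ t := by
  rw [List.nodup_append] at h
  refine ⟨fun hx => h.2.2 x hx x (by simp) rfl, ?_, fun y hy hyt => h.2.2 y hy y (by simp [hyt]) rfl⟩
  have := h.2.1
  rw [List.nodup_cons] at this
  exact this.1


variable [Fintype V]

def interPairs {r : ℕ} (p : Fin r → List V) : Finset (Fin r) :=
  univ.filter fun i => ∃ j, j ≠ i ∧ ∃ x, x ∈ p i ∧ x ∈ p j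

def swapped {r : ℕ} (p : Fin r → List V) (i₀ j₀ : Fin r) (s₁ : List V) (x₀ : V)
    (t₁ s₂ t₂ : List V) : Fin r → List V :=
  Function.update (Function.update p i₀ (s₁ ++ x₀ :: t₂)) j₀ (s₂ ++ x₀ :: t₁)

structure MoveSpec {r : ℕ} (p : Fin r → List V) (i₀ j₀ : Fin r) (s₁ : List V) (x₀ : V)
    (t₁ s₂ t₂ : List V) : Prop where
  i0_mem : i₀ ∈ interPairs p
  i0_min : ∀ i ∈ interPairs p, i₀ ≤ i
  split1 : p i₀ = s₁ ++ x₀ :: t₁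
  s1_lo : ∀ y ∈ s₁, ¬ ∃ j, j ≠ i₀ ∧ y ∈ p j
  j0_ne : j₀ ≠ i₀
  j0_min : ∀ j, j ≠ i₀ → x₀ ∈ p j → j₀ ≤ j
  split2 : p j₀ = s₂ ++ x₀ :: t₂
  s2_no : x₀ ∉ s₂

open scoped Classical in
noncomputable def move {r : ℕ} (z : Σ _ : Equiv.Perm (Fin r), Fin r → List V) :
    Σ _ : Equiv.Perm (Fin r), Fin r → List V :=
  if h : ∃ t : (Fin r × Fin r) × (List V × V × List V) × (List V × List V),
      MoveSpec z.2 t.1.1 t.1.2 t.2.1.1 t.2.1.2.1 t.2.1.2.2 t.2.2.1 t.2.2.2 then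
    ⟨z.1 * Equiv.swap h.choose.1.1 h.choose.1.2,
      swapped z.2 h.choose.1.1 h.choose.1.2 h.choose.2.1.1 h.choose.2.1.2.1
        h.choose.2.1.2.2 h.choose.2.2.1 h.choose.2.2.2⟩
  else z

namespace MoveSpec

variable {r : ℕ} {p : Fin r → List V} {i₀ j₀ : Fin r} {s₁ : List V} {x₀ : V}
  {t₁ s₂ t₂ : List V}

theorem x0_mem2 (h : MoveSpec p i₀ j₀ s₁ x₀ t₁ s₂ t₂) : x₀ ∈ p j₀ := by
  rw [h.split2]; simp

theorem x0_mem1 (h : MoveSpec p i₀ j₀ s₁ x₀ t₁ s₂ t₂) : x₀ ∈ p i₀ := by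
  rw [h.split1]; simp

theorem unique {i₀' j₀' : Fin r} {s₁' : List V} {x₀' : V} {t₁' s₂' t₂' : List V}
    (h : MoveSpec p i₀ j₀ s₁ x₀ t₁ s₂ t₂) (h' : MoveSpec p i₀' j₀' s₁' x₀' t₁' s₂' t₂') :
    i₀ = i₀' ∧ j₀ = j₀' ∧ s₁ = s₁' ∧ x₀ = x₀' ∧ t₁ = t₁' ∧ s₂ = s₂' ∧ t₂ = t₂' := by
  have hi : i₀ = i₀' := le_antisymm (h.i0_min i₀' h'.i0_mem) (h'.i0_min i₀ h.i0_mem)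
  subst hi
  have e1 : splitF (fun x => ∃ j, j ≠ i₀ ∧ x ∈ p j) (p i₀) = (s₁, x₀ :: t₁) := by
    rw [h.split1]
    exact splitF_eq _ s₁ x₀ t₁ h.s1_lo ⟨j₀, h.j0_ne, h.x0_mem2⟩
  have e1' : splitF (fun x => ∃ j, j ≠ i₀ ∧ x ∈ p j) (p i₀) = (s₁', x₀' :: t₁') := by
    rw [h'.split1]
    exact splitF_eq _ s₁' x₀' t₁' h'.s1_lo ⟨j₀', h'.j0_ne, h'.x0_mem2⟩
  rw [e1] at e1'
  obtain ⟨hs₁, hx₀, ht₁⟩ : s₁ = s₁' ∧ x₀ = x₀' ∧ t₁ = t₁' := by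
    have h1 := congrArg Prod.fst e1'
    have h2 := congrArg Prod.snd e1'
    simp only at h1 h2
    rw [List.cons.injEq] at h2
    exact ⟨h1, h2.1, h2.2⟩
  subst hs₁; subst hx₀; subst ht₁
  have hj : j₀ = j₀' := le_antisymm (h.j0_min j₀' h'.j0_ne h'.x0_mem2)
    (h'.j0_min j₀ h.j0_ne h.x0_mem2)
  subst hj
  have e2 : splitF (fun y => y = x₀) (p j₀) = (s₂, x₀ :: t₂) := by
    rw [h.split2]
    exact splitF_eq _ s₂ x₀ t₂ (fun y hy hyx => h.s2_no (hyx ▸ hy)) rfl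
  have e2' : splitF (fun y => y = x₀) (p j₀) = (s₂', x₀ :: t₂') := by
    rw [h'.split2]
    exact splitF_eq _ s₂' x₀ t₂' (fun y hy hyx => h'.s2_no (hyx ▸ hy)) rfl
  rw [e2] at e2'
  have h1 := congrArg Prod.fst e2'
  have h2 := congrArg Prod.snd e2'
  simp only at h1 h2
  rw [List.cons.injEq] at h2
  exact ⟨rfl, rfl, rfl, rfl, rfl, h1, h2.2⟩

theorem move_eq (h : MoveSpec p i₀ j₀ s₁ x₀ t₁ s₂ t₂) (σ : Equiv.Perm (Fin r)) :
    move ⟨σ, p⟩ = ⟨σ * Equiv.swap i₀ j₀, swapped p i₀ j₀ s₁ x₀ t₁ s₂ t₂⟩ := by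
  have hex : ∃ t : (Fin r × Fin r) × (List V × V × List V) × (List V × List V),
      MoveSpec p t.1.1 t.1.2 t.2.1.1 t.2.1.2.1 t.2.1.2.2 t.2.2.1 t.2.2.2 :=
    ⟨⟨(i₀, j₀), (s₁, x₀, t₁), (s₂, t₂)⟩, h⟩
  rw [move]
  rw [dif_pos hex]
  obtain ⟨e1, e2, e3, e4, e5, e6, e7⟩ := MoveSpec.unique hex.choose_spec h
  rw [e1, e2, e3, e4, e5, e6, e7]

end MoveSpec

theorem exists_spec {r : ℕ} (p : Fin r → List V)
    (hbad : ∃ i j, i ≠ j ∧ ∃ x, x ∈ p i ∧ x ∈ p j) :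
    ∃ i₀ j₀ s₁ x₀ t₁ s₂ t₂, MoveSpec p i₀ j₀ s₁ x₀ t₁ s₂ t₂ := by
  obtain ⟨i, j, hij, x, hxi, hxj⟩ := hbad
  have hne : (interPairs p).Nonempty := by
    refine ⟨i, ?_⟩
    simp only [interPairs, Finset.mem_filter, Finset.mem_univ, true_and]
    exact ⟨j, Ne.symm hij, x, hxi, hxj⟩
  set i₀ := (interPairs p).min' hne with hi₀def
  have hi₀ : i₀ ∈ interPairs p := Finset.min'_mem _ _
  have hi₀' : ∃ j, j ≠ i₀ ∧ ∃ x, x ∈ p i₀ ∧ x ∈ p j := by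
    simpa only [interPairs, Finset.mem_filter, Finset.mem_univ, true_and] using hi₀
  obtain ⟨j', hj', x', hx'i, hx'j⟩ := hi₀'
  set pred : V → Prop := fun y => ∃ k, k ≠ i₀ ∧ y ∈ p k with hpreddef
  have hLne : (splitF pred (p i₀)).2 ≠ [] :=
    splitF_snd_ne_nil pred _ x' hx'i ⟨j', hj', hx'j⟩
  set x₀ := (splitF pred (p i₀)).2.head hLne with hx₀def
  have hx₀pred : pred x₀ := splitF_snd_head pred _ hLne
  have split1 : p i₀ = (splitF pred (p i₀)).1 ++ x₀ :: (splitF pred (p i₀)).2.tail := by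
    conv_lhs => rw [← splitF_append pred (p i₀)]
    congr 1
    exact (List.cons_head_tail hLne).symm
  obtain ⟨j'', hj''ne, hx₀j''⟩ := hx₀pred
  have h2ne : (univ.filter fun j => j ≠ i₀ ∧ x₀ ∈ p j).Nonempty :=
    ⟨j'', by simp [hj''ne, hx₀j'']⟩
  set j₀ := (univ.filter fun j => j ≠ i₀ ∧ x₀ ∈ p j).min' h2ne with hj₀def
  have hj₀mem := Finset.min'_mem _ h2ne
  rw [Finset.mem_filter] at hj₀mem
  have hj₀ne : j₀ ≠ i₀ := hj₀mem.2.1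
  have hx₀j₀ : x₀ ∈ p j₀ := hj₀mem.2.2
  have hMne : (splitF (fun y => y = x₀) (p j₀)).2 ≠ [] :=
    splitF_snd_ne_nil _ _ x₀ hx₀j₀ rfl
  have hMhead : (splitF (fun y => y = x₀) (p j₀)).2.head hMne = x₀ :=
    splitF_snd_head (fun y => y = x₀) _ hMne
  obtain ⟨c, ct, hct⟩ := List.exists_cons_of_ne_nil hMne
  have hc : c = x₀ := by
    have h2 : (splitF (fun y => y = x₀) (p j₀)).2.head? = some x₀ := by
      rw [List.head?_eq_head hMne, hMhead]
    rw [hct] at h2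
    simpa using h2
  have split2 : p j₀ = (splitF (fun y => y = x₀) (p j₀)).1
      ++ x₀ :: (splitF (fun y => y = x₀) (p j₀)).2.tail := by
    conv_lhs => rw [← splitF_append (fun y => y = x₀) (p j₀)]
    rw [hct]
    simp [hc]
  refine ⟨i₀, j₀, (splitF pred (p i₀)).1, x₀, (splitF pred (p i₀)).2.tail,
    (splitF (fun y => y = x₀) (p j₀)).1, (splitF (fun y => y = x₀) (p j₀)).2.tail, ?_⟩
  exact {
    i0_mem := hi₀
    i0_min := fun i hi => Finset.min'_le _ _ hi
    split1 := split1
    s1_lo := splitF_fst pred (p i₀)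
    j0_ne := hj₀ne
    j0_min := fun j h1 h2 => Finset.min'_le _ _ (by simp [h1, h2])
    split2 := split2
    s2_no := fun hx => splitF_fst (fun y => y = x₀) (p j₀) x₀ hx rfl }
namespace MoveSpec

variable {r : ℕ} {p : Fin r → List V} {i₀ j₀ : Fin r} {s₁ : List V} {x₀ : V}
  {t₁ s₂ t₂ : List V}

theorem i0_lt_j0 (h : MoveSpec p i₀ j₀ s₁ x₀ t₁ s₂ t₂) : i₀ < j₀ := by
  refine lt_of_le_of_ne ?_ (Ne.symm h.j0_ne)
  apply h.i0_min
  simp only [interPairs, Finset.mem_filter, Finset.mem_univ, true_and]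
  exact ⟨i₀, Ne.symm h.j0_ne, x₀, h.x0_mem2, h.x0_mem1⟩

theorem q_i0 (h : MoveSpec p i₀ j₀ s₁ x₀ t₁ s₂ t₂) :
    swapped p i₀ j₀ s₁ x₀ t₁ s₂ t₂ i₀ = s₁ ++ x₀ :: t₂ := by
  rw [swapped, Function.update_of_ne h.j0_ne.symm, Function.update_self]

theorem q_j0 (h : MoveSpec p i₀ j₀ s₁ x₀ t₁ s₂ t₂) :
    swapped p i₀ j₀ s₁ x₀ t₁ s₂ t₂ j₀ = s₂ ++ x₀ :: t₁ := by
  rw [swapped, Function.update_self]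

theorem q_other (_h : MoveSpec p i₀ j₀ s₁ x₀ t₁ s₂ t₂) {i : Fin r} (h1 : i ≠ i₀) (h2 : i ≠ j₀) :
    swapped p i₀ j₀ s₁ x₀ t₁ s₂ t₂ i = p i := by
  rw [swapped, Function.update_of_ne h2, Function.update_of_ne h1]

theorem q_subset (h : MoveSpec p i₀ j₀ s₁ x₀ t₁ s₂ t₂) (k : Fin r) (y : V)
    (hy : y ∈ swapped p i₀ j₀ s₁ x₀ t₁ s₂ t₂ k) : y ∈ p k ∨ y ∈ p i₀ ∨ y ∈ p j₀ := by
  by_cases h1 : k = j₀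
  · rw [h1, h.q_j0] at hy
    rcases List.mem_append.mp hy with hy | hy
    · right; right; rw [h.split2]; simp [hy]
    · rcases List.mem_cons.mp hy with rfl | hy
      · right; right; exact h.x0_mem2
      · right; left; rw [h.split1]; simp [hy]
  by_cases h2 : k = i₀
  · rw [h2, h.q_i0] at hy
    rcases List.mem_append.mp hy with hy | hy
    · right; left; rw [h.split1]; simp [hy]
    · rcases List.mem_cons.mp hy with rfl | hy
      · right; left; exact h.x0_mem1
      · right; right; rw [h.split2]; simp [hy]
  · rw [h.q_other h2 h1] at hy
    exact Or.inl hy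

theorem swapped_spec (h : MoveSpec p i₀ j₀ s₁ x₀ t₁ s₂ t₂) (hnd : ∀ i, (p i).Nodup) :
    MoveSpec (swapped p i₀ j₀ s₁ x₀ t₁ s₂ t₂) i₀ j₀ s₁ x₀ t₂ s₂ t₁ := by
  have hnd₁ := hnd i₀
  rw [h.split1] at hnd₁
  obtain ⟨hx₀s₁, hx₀t₁, hs₁t₁⟩ := nodup_mid hnd₁
  refine {
    i0_mem := ?_, i0_min := ?_, split1 := h.q_i0, s1_lo := ?_, j0_ne := h.j0_ne,
    j0_min := ?_, split2 := h.q_j0, s2_no := h.s2_no }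
  · simp only [interPairs, Finset.mem_filter, Finset.mem_univ, true_and]
    exact ⟨j₀, h.j0_ne, x₀, by rw [h.q_i0]; simp, by rw [h.q_j0]; simp⟩
  · intro i hi
    by_cases h1 : i = i₀
    · exact h1 ▸ le_refl i₀
    by_cases h2 : i = j₀
    · exact h2 ▸ le_of_lt h.i0_lt_j0
    · simp only [interPairs, Finset.mem_filter, Finset.mem_univ, true_and] at hi
      obtain ⟨j, hjne, x, hxi, hxj⟩ := hi
      rw [h.q_other h1 h2] at hxi
      apply h.i0_min
      simp only [interPairs, Finset.mem_filter, Finset.mem_univ, true_and]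
      rcases h.q_subset j x hxj with hx | hx | hx
      · exact ⟨j, hjne, x, hxi, hx⟩
      · exact ⟨i₀, Ne.symm h1, x, hxi, hx⟩
      · exact ⟨j₀, Ne.symm h2, x, hxi, hx⟩
  · intro y hy hex
    obtain ⟨j, hjne, hyj⟩ := hex
    by_cases h1 : j = j₀
    · rw [h1, h.q_j0] at hyj
      rcases List.mem_append.mp hyj with hyj | hyj
      · exact h.s1_lo y hy ⟨j₀, h.j0_ne, by rw [h.split2]; simp [hyj]⟩
      · rcases List.mem_cons.mp hyj with rfl | hyj
        · exact hx₀s₁ hy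
        · exact hs₁t₁ y hy hyj
    · rw [h.q_other hjne h1] at hyj
      exact h.s1_lo y hy ⟨j, hjne, hyj⟩
  · intro j hjne hxj
    by_cases h1 : j = j₀
    · exact h1 ▸ le_refl j₀
    · rw [h.q_other hjne h1] at hxj
      exact h.j0_min j hjne hxj

theorem swapped_swapped (h : MoveSpec p i₀ j₀ s₁ x₀ t₁ s₂ t₂) :
    swapped (swapped p i₀ j₀ s₁ x₀ t₁ s₂ t₂) i₀ j₀ s₁ x₀ t₂ s₂ t₁ = p := by
  funext i
  show Function.update (Function.update (swapped p i₀ j₀ s₁ x₀ t₁ s₂ t₂) i₀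
      (s₁ ++ x₀ :: t₁)) j₀ (s₂ ++ x₀ :: t₂) i = p i
  by_cases h1 : i = j₀
  · rw [h1, Function.update_self, ← h.split2]
  rw [Function.update_of_ne h1]
  by_cases h2 : i = i₀
  · rw [h2, Function.update_self, ← h.split1]
  · rw [Function.update_of_ne h2, h.q_other h2 h1]

theorem swapped_paths {adj : V → V → Prop} {A B : Fin r → V}
    (h : MoveSpec p i₀ j₀ s₁ x₀ t₁ s₂ t₂)
    (hmem : ∀ i, IsDirPath adj (p i) (A i) (B i)) (i : Fin r) :
    IsDirPath adj (swapped p i₀ j₀ s₁ x₀ t₁ s₂ t₂ i) (A i) (B (Equiv.swap i₀ j₀ i)) := by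
  by_cases h1 : i = i₀
  · rw [h1, h.q_i0, Equiv.swap_apply_left]
    exact IsDirPath.glue (h.split1 ▸ hmem i₀) (h.split2 ▸ hmem j₀)
  by_cases h2 : i = j₀
  · rw [h2, h.q_j0, Equiv.swap_apply_right]
    exact IsDirPath.glue (h.split2 ▸ hmem j₀) (h.split1 ▸ hmem i₀)
  · rw [h.q_other h1 h2, Equiv.swap_apply_of_ne_of_ne h1 h2]
    exact hmem i

theorem swapped_weight (w : V → V → ℝ) (h : MoveSpec p i₀ j₀ s₁ x₀ t₁ s₂ t₂) :
    ∏ i, pathWeight w (swapped p i₀ j₀ s₁ x₀ t₁ s₂ t₂ i) = ∏ i, pathWeight w (p i) := by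
  have hij : i₀ ≠ j₀ := Ne.symm h.j0_ne
  have key : (fun k => pathWeight w (swapped p i₀ j₀ s₁ x₀ t₁ s₂ t₂ k))
      = Function.update (Function.update (fun k => pathWeight w (p k)) i₀
          (pathWeight w (s₁ ++ x₀ :: t₂))) j₀ (pathWeight w (s₂ ++ x₀ :: t₁)) := by
    funext k
    show pathWeight w (swapped p i₀ j₀ s₁ x₀ t₁ s₂ t₂ k) = _
    by_cases h1 : k = j₀
    · rw [h1, h.q_j0, Function.update_self]
    rw [Function.update_of_ne h1]
    by_cases h2 : k = i₀
    · rw [h2, h.q_i0, Function.update_self]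
    · rw [Function.update_of_ne h2, h.q_other h2 h1]
  calc ∏ k, pathWeight w (swapped p i₀ j₀ s₁ x₀ t₁ s₂ t₂ k)
      = ∏ k, Function.update (Function.update (fun k => pathWeight w (p k)) i₀
          (pathWeight w (s₁ ++ x₀ :: t₂))) j₀ (pathWeight w (s₂ ++ x₀ :: t₁)) k := by
        rw [key]
    _ = pathWeight w (s₂ ++ x₀ :: t₁) * ∏ k ∈ univ \ {j₀},
          Function.update (fun k => pathWeight w (p k)) i₀
            (pathWeight w (s₁ ++ x₀ :: t₂)) k := by
        rw [Finset.prod_update_of_mem (Finset.mem_univ j₀)]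
    _ = pathWeight w (s₂ ++ x₀ :: t₁) * (pathWeight w (s₁ ++ x₀ :: t₂)
          * ∏ k ∈ (univ \ {j₀}) \ {i₀}, pathWeight w (p k)) := by
        rw [Finset.prod_update_of_mem (by simp [hij] : i₀ ∈ univ \ {j₀})]
    _ = pathWeight w (p j₀) * (pathWeight w (p i₀)
          * ∏ k ∈ (univ \ {j₀}) \ {i₀}, pathWeight w (p k)) := by
        rw [← mul_assoc, ← mul_assoc]
        congr 1
        rw [h.split1, h.split2, pathWeight_split w x₀ t₁ s₂, pathWeight_split w x₀ t₂ s₁,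
          pathWeight_split w x₀ t₂ s₂, pathWeight_split w x₀ t₁ s₁]
        ring
    _ = ∏ k, pathWeight w (p k) := by
        rw [show ((univ : Finset (Fin r)) \ {j₀}) \ {i₀} = (univ.erase j₀).erase i₀ from by
          simp [Finset.erase_eq]]
        rw [Finset.mul_prod_erase (univ.erase j₀) (fun k => pathWeight w (p k))
          (by simp [Finset.mem_erase, hij] : i₀ ∈ univ.erase j₀)]
        rw [Finset.mul_prod_erase univ (fun k => pathWeight w (p k)) (Finset.mem_univ j₀)]

end MoveSpec

theorem fin_strictMono_le {r : ℕ} {F : Fin r → Fin r} (hF : StrictMono F) (i : Fin r) :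
    i ≤ F i := by
  have key : ∀ n : ℕ, ∀ hn : n < r, n ≤ (F ⟨n, hn⟩ : ℕ) := by
    intro n
    induction n with
    | zero => intro hn; exact Nat.zero_le _
    | succ m ih =>
        intro hn
        have hm : m < r := Nat.lt_of_succ_lt hn
        have h1 : (m : ℕ) ≤ F ⟨m, hm⟩ := ih hm
        have h2 : F ⟨m, hm⟩ < F ⟨m + 1, hn⟩ := hF (by simp [Fin.lt_def])
        rw [Fin.lt_def] at h2
        omega
  have := key i.1 i.2
  rwa [Fin.le_def]

theorem perm_exists_inversion {r : ℕ} {σ : Equiv.Perm (Fin r)} (h : σ ≠ 1) :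
    ∃ i j, i < j ∧ σ j < σ i := by
  by_contra hc
  push_neg at hc
  have hsm : StrictMono σ := fun i j hij =>
    lt_of_le_of_ne (hc i j hij) (fun he => hij.ne (σ.injective he))
  have hsm' : StrictMono ⇑σ.symm := by
    intro i j hij
    rcases lt_trichotomy (σ.symm i) (σ.symm j) with hlt | heq | hgt
    · exact hlt
    · exact absurd (by rw [← σ.apply_symm_apply i, ← σ.apply_symm_apply j, heq]) hij.ne
    · exact absurd (by simpa using hsm hgt) (not_lt.mpr hij.le)
  apply h
  ext i
  have h1 : i ≤ σ i := fin_strictMono_le hsm i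
  have h2 : σ i ≤ i := by
    have := fin_strictMono_le hsm' (σ i)
    simpa using this
  simp [le_antisymm h2 h1]
end LGV

/-- If all edge weights of a planar acyclic directed network (with compatibly
ordered sources and sinks, expressed by the crossing condition `hcross`) are
non-negative, then its weight matrix is totally non-negative: every minor is
non-negative. -/
theorem weightMatrix_totally_nonneg {V : Type*} [Fintype V] [DecidableEq V]
    (adj : V → V → Prop) (w : V → V → ℝ) (n : ℕ) (a b : Fin n → V)
    (P : Fin n → Fin n → Finset (List V))
    (hP : ∀ i j l, l ∈ P i j ↔ IsDirPath adj l (a i) (b j))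
    -- acyclicity: no directed path with at least one edge returns to its start
    (hacyc : ∀ l : List V, 2 ≤ l.length → l.Chain' adj → l.head? ≠ l.getLast?)
    -- planarity: for `i < i'`, `j < j'`, any path `a i → b j'` meets any path `a i' → b j`
    (hcross : ∀ i i' j j' : Fin n, i < i' → j < j' →
      ∀ p q : List V, IsDirPath adj p (a i) (b j') → IsDirPath adj q (a i') (b j) →
        ∃ x, x ∈ p ∧ x ∈ q)
    -- non-negative edge weights
    (hw : ∀ u v, 0 ≤ w u v)
    -- the weight matrix
    (W : Matrix (Fin n) (Fin n) ℝ)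
    (hW : ∀ i j, W i j = ∑ l ∈ P i j, pathWeight w l) :
    ∀ (r : ℕ) (f g : Fin r → Fin n), StrictMono f → StrictMono g →
      0 ≤ (W.submatrix f g).det := by
  classical
  intro r f g hf hg
  have hdet : (W.submatrix f g).det =
      ∑ z ∈ (Finset.univ.sigma fun σ : Equiv.Perm (Fin r) =>
          Fintype.piFinset fun i => P (f i) (g (σ i))),
        ((Equiv.Perm.sign z.1 : ℤ) : ℝ) * ∏ i, pathWeight w (z.2 i) := by
    rw [← Matrix.det_transpose, Matrix.det_apply', Finset.sum_sigma]
    apply Finset.sum_congr rfl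
    intro σ _
    have h1 : ∏ i, (W.submatrix f g).transpose (σ i) i
        = ∑ p ∈ Fintype.piFinset (fun i => P (f i) (g (σ i))), ∏ i, pathWeight w (p i) := by
      have : ∀ i : Fin r, (W.submatrix f g).transpose (σ i) i
          = ∑ l ∈ P (f i) (g (σ i)), pathWeight w l := by
        intro i
        simp [Matrix.transpose_apply, Matrix.submatrix_apply, hW]
      rw [Finset.prod_congr rfl fun i _ => this i]
      exact Finset.prod_univ_sum _ _
    rw [h1, Finset.mul_sum]
  set S : Finset (Σ _ : Equiv.Perm (Fin r), Fin r → List V) :=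
    Finset.univ.sigma fun σ : Equiv.Perm (Fin r) =>
      Fintype.piFinset fun i => P (f i) (g (σ i)) with hSdef
  set badP : (Σ _ : Equiv.Perm (Fin r), Fin r → List V) → Prop :=
    fun z => ∃ i j, i ≠ j ∧ ∃ x, x ∈ z.2 i ∧ x ∈ z.2 j with hbadPdef
  have hmemS : ∀ z ∈ S, ∀ i, IsDirPath adj (z.2 i) (a (f i)) (b (g (z.1 i))) := by
    rintro ⟨σ, p⟩ hz i
    exact (hP _ _ _).mp ((Fintype.mem_piFinset.mp (Finset.mem_sigma.mp hz).2) i)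
  have hndS : ∀ z ∈ S, ∀ i, (z.2 i).Nodup := by
    intro z hz i
    exact LGV.chain'_nodup hacyc _ (hmemS z hz i).2.2.2
  rw [hdet, ← Finset.sum_filter_add_sum_filter_not S badP]
  have hbad : ∑ z ∈ S.filter badP,
      ((Equiv.Perm.sign z.1 : ℤ) : ℝ) * ∏ i, pathWeight w (z.2 i) = 0 := by
    apply Finset.sum_involution (fun z _ => LGV.move z)
    · -- f z + f (move z) = 0
      rintro ⟨σ, p⟩ hz
      rw [Finset.mem_filter] at hz
      obtain ⟨i₀, j₀, s₁, x₀, t₁, s₂, t₂, hspec⟩ := LGV.exists_spec p hz.2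
      rw [hspec.move_eq σ]
      have hweq := LGV.MoveSpec.swapped_weight w hspec
      have hne' : i₀ ≠ j₀ := Ne.symm hspec.j0_ne
      have hsign : ((Equiv.Perm.sign (σ * Equiv.swap i₀ j₀) : ℤ) : ℝ)
          = -((Equiv.Perm.sign σ : ℤ) : ℝ) := by
        rw [Equiv.Perm.sign_mul, Equiv.Perm.sign_swap hne']
        push_cast
        ring
      show ((Equiv.Perm.sign σ : ℤ) : ℝ) * ∏ i, pathWeight w (p i)
          + ((Equiv.Perm.sign (σ * Equiv.swap i₀ j₀) : ℤ) : ℝ)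
            * ∏ i, pathWeight w (LGV.swapped p i₀ j₀ s₁ x₀ t₁ s₂ t₂ i) = 0
      rw [hweq, hsign]
      ring
    · -- move z ≠ z
      rintro ⟨σ, p⟩ hz _
      rw [Finset.mem_filter] at hz
      obtain ⟨i₀, j₀, s₁, x₀, t₁, s₂, t₂, hspec⟩ := LGV.exists_spec p hz.2
      rw [hspec.move_eq σ]
      intro heq
      have h1 := congrArg Sigma.fst heq
      simp only at h1
      have h2 : Equiv.swap i₀ j₀ = 1 := by
        have h3 : σ * Equiv.swap i₀ j₀ = σ * 1 := by rw [mul_one]; exact h1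
        exact mul_left_cancel h3
      have h3 : Equiv.swap i₀ j₀ i₀ = i₀ := by rw [h2]; rfl
      rw [Equiv.swap_apply_left] at h3
      exact hspec.j0_ne h3
    · -- move (move z) = z
      rintro ⟨σ, p⟩ hz
      rw [Finset.mem_filter] at hz
      obtain ⟨i₀, j₀, s₁, x₀, t₁, s₂, t₂, hspec⟩ := LGV.exists_spec p hz.2
      have hnd : ∀ i, (p i).Nodup := hndS ⟨σ, p⟩ hz.1
      rw [hspec.move_eq σ, (hspec.swapped_spec hnd).move_eq (σ * Equiv.swap i₀ j₀),
        hspec.swapped_swapped, mul_assoc, Equiv.swap_mul_self, mul_one]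
    · -- move z ∈ S.filter badP
      rintro ⟨σ, p⟩ hz
      rw [Finset.mem_filter] at hz
      obtain ⟨i₀, j₀, s₁, x₀, t₁, s₂, t₂, hspec⟩ := LGV.exists_spec p hz.2
      rw [hspec.move_eq σ, Finset.mem_filter]
      constructor
      · rw [hSdef, Finset.mem_sigma]
        refine ⟨Finset.mem_univ _, ?_⟩
        rw [Fintype.mem_piFinset]
        intro i
        rw [hP]
        have := LGV.MoveSpec.swapped_paths hspec (hmemS ⟨σ, p⟩ hz.1) i
        simpa [Equiv.Perm.mul_apply] using this
      · exact ⟨i₀, j₀, Ne.symm hspec.j0_ne, x₀,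
          by show x₀ ∈ LGV.swapped p i₀ j₀ s₁ x₀ t₁ s₂ t₂ i₀; rw [hspec.q_i0]; simp,
          by show x₀ ∈ LGV.swapped p i₀ j₀ s₁ x₀ t₁ s₂ t₂ j₀; rw [hspec.q_j0]; simp⟩
  have hgood : 0 ≤ ∑ z ∈ S.filter fun z => ¬ badP z,
      ((Equiv.Perm.sign z.1 : ℤ) : ℝ) * ∏ i, pathWeight w (z.2 i) := by
    apply Finset.sum_nonneg
    rintro ⟨σ, p⟩ hz
    rw [Finset.mem_filter] at hz
    obtain ⟨hzS, hnb⟩ := hz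
    rcases eq_or_ne σ 1 with rfl | hσ
    · simp only [Equiv.Perm.sign_one]
      have : 0 ≤ ∏ i, pathWeight w (p i) :=
        Finset.prod_nonneg fun i _ => LGV.pathWeight_nonneg w hw _
      simpa using this
    · exfalso
      obtain ⟨i, j, hij, hji⟩ := LGV.perm_exists_inversion hσ
      have hmem := hmemS ⟨σ, p⟩ hzS
      obtain ⟨x, hx1, hx2⟩ := hcross (f i) (f j) (g (σ j)) (g (σ i)) (hf hij) (hg hji)
        (p i) (p j) (hmem i) (hmem j)
      exact hnb ⟨i, j, hij.ne, x, hx1, hx2⟩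
  rw [hbad, zero_add]
  exact hgood
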